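/- arXiv:0706.2581 — 2 statements merged into one kernel-verified Lean document; each statement's English description precedes it below -/
import Mathlib

section
/- The polynomials C₂' = v₊v₋ + 2(s₊s₋ + t₊t₋) and C₄' = v₊v₋s₊s₋ + (s₊s₋ − t₊t₋)² − v₊²s₋t₊ − v₋²s₊t₋ + v₊v₋t₊t₋ are invariants of the Lie algebra g obtained by contracting so(5) along its subalgebra su(2) × u(1). -/
open MvPolynomial

/-- Dual coordinates `u₊,u₋,u₃,v₃,v₊,v₋,s₊,s₋,t₊,t₋` (variables `0,…,9`) to the seniority
basis `{U₊,U₋,U₃,V₃,V₊,V₋,S₊,S₋,T₊,T₋}` of `so(5)`. -/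
noncomputable def up : MvPolynomial (Fin 10) ℝ := X 0
noncomputable def um : MvPolynomial (Fin 10) ℝ := X 1
noncomputable def u3 : MvPolynomial (Fin 10) ℝ := X 2
noncomputable def v3 : MvPolynomial (Fin 10) ℝ := X 3
noncomputable def vp : MvPolynomial (Fin 10) ℝ := X 4
noncomputable def vm : MvPolynomial (Fin 10) ℝ := X 5
noncomputable def sp : MvPolynomial (Fin 10) ℝ := X 6
noncomputable def sm : MvPolynomial (Fin 10) ℝ := X 7
noncomputable def tp : MvPolynomial (Fin 10) ℝ := X 8
noncomputable def tm : MvPolynomial (Fin 10) ℝ := X 9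

/-- `so5Bk i j = Σ_k C_{ij}^k x_k`: the brackets of `so(5)` in the seniority basis
`{U₊,U₋,U₃,V₃,V₊,V₋,S₊,S₋,T₊,T₋}`, written in the dual coordinates.  Nonzero brackets:
`[U±,U₃]=∓U±`, `[U₊,U₋]=2U₃`, `[U±,V±]=∓2S±`, `[U±,V∓]=∓2T±`, `[U±,S∓]=±V∓`,
`[U±,T∓]=±V±`, `[U₃,S±]=±S±`, `[U₃,T±]=±T±`, `[V₃,S±]=±S±`, `[V₃,T±]=∓T±`,
`[V₊,V₋]=2V₃`, `[V±,V₃]=∓V±`, `[V±,S∓]=∓U∓`, `[V±,T±]=±U±`, `[S₊,S₋]=U₃+V₃`,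
`[T₊,T₋]=U₃−V₃`. -/
noncomputable def so5Bk : Fin 10 → Fin 10 → MvPolynomial (Fin 10) ℝ :=
  ![![0, 2 * u3, -up, 0, -2 * sp, -2 * tp, 0, vm, 0, vp],
    ![-2 * u3, 0, um, 0, 2 * tm, 2 * sm, -vp, 0, -vm, 0],
    ![up, -um, 0, 0, 0, 0, sp, -sm, tp, -tm],
    ![0, 0, 0, 0, vp, -vm, sp, -sm, -tp, tm],
    ![2 * sp, -2 * tm, 0, -vp, 0, 2 * v3, 0, -um, up, 0],
    ![2 * tp, -2 * sm, 0, vm, -2 * v3, 0, up, 0, 0, -um],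
    ![0, vp, -sp, -sp, 0, -up, 0, u3 + v3, 0, 0],
    ![-vm, 0, sm, sm, um, 0, -u3 - v3, 0, 0, 0],
    ![0, vm, -tp, tp, -up, 0, 0, 0, 0, u3 - v3],
    ![-vp, 0, tm, -tm, 0, um, 0, 0, -u3 + v3, 0]]

/-- The brackets of the contraction `g` of `so(5)` along its subalgebra `su(2) × u(1)`
(spanned by `U₊,U₋,U₃,V₃`, indices `0,…,3`): all brackets involving a subalgebra generator
are kept, brackets of two elements of the complement are set to zero. -/
noncomputable def so5ContrBk (i j : Fin 10) : MvPolynomial (Fin 10) ℝ :=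
  if i.1 < 4 ∨ j.1 < 4 then so5Bk i j else 0

/-- `F` is an invariant of the Lie algebra with structure constants `C_{ij}^k`
(encoded through `bk i j = Σ_k C_{ij}^k x_k`): for every `i`,
`Σ_{j,k} C_{ij}^k x_k ∂F/∂x_j = Σ_j bk i j ∂F/∂x_j = 0`. -/
def IsLieInvariant (bk : Fin 10 → Fin 10 → MvPolynomial (Fin 10) ℝ)
    (F : MvPolynomial (Fin 10) ℝ) : Prop :=
  ∀ i : Fin 10, ∑ j : Fin 10, bk i j * pderiv j F = 0

/-- The quartic invariant `C₄'` of the contraction. -/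
noncomputable def C₄' : MvPolynomial (Fin 10) ℝ :=
  vp * vm * sp * sm + (sp * sm - tp * tm) ^ 2 - vp ^ 2 * sm * tp - vm ^ 2 * sp * tm
    + vp * vm * tp * tm

/- STATEMENT 12: `C₂' = v₊v₋ + 2(s₊s₋ + t₊t₋)` and
`C₄' = v₊v₋s₊s₋ + (s₊s₋ − t₊t₋)² − v₊²s₋t₊ − v₋²s₊t₋ + v₊v₋t₊t₋` are invariants of the
Lie algebra `g` obtained by contracting `so(5)` along its subalgebra `su(2) × u(1)`. -/
lemma sum_univ_ten' {β : Type*} [AddCommMonoid β] (f : Fin 10 → β) :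
    ∑ i, f i = f 0 + f 1 + f 2 + f 3 + f 4 + f 5 + f 6 + f 7 + f 8 + f 9 := by
  rw [Fin.sum_univ_castSucc, Fin.sum_univ_castSucc, Fin.sum_univ_eight]
  rfl

lemma pderiv_two (i : Fin 10) : pderiv i (2 : MvPolynomial (Fin 10) ℝ) = 0 := by
  have h : (2 : MvPolynomial (Fin 10) ℝ) = C 2 := (map_ofNat C 2).symm
  rw [h, pderiv_C]

lemma inv_c2_0 : ∑ j : Fin 10, so5ContrBk 0 j * pderiv j (vp * vm + 2 * (sp * sm + tp * tm)) = 0 := by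
  rw [sum_univ_ten']
  rw [show so5ContrBk 0 0 = 0 from rfl,
    show so5ContrBk 0 1 = 2 * u3 from rfl,
    show so5ContrBk 0 2 = -up from rfl,
    show so5ContrBk 0 3 = 0 from rfl,
    show so5ContrBk 0 4 = -2 * sp from rfl,
    show so5ContrBk 0 5 = -2 * tp from rfl,
    show so5ContrBk 0 6 = 0 from rfl,
    show so5ContrBk 0 7 = vm from rfl,
    show so5ContrBk 0 8 = 0 from rfl,
    show so5ContrBk 0 9 = vp from rfl]
  simp [C₄', up, um, u3, v3, vp, vm, sp, sm, tp, tm, pow_two, pderiv_mul, pderiv_two]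
  try ring

lemma inv_c2_1 : ∑ j : Fin 10, so5ContrBk 1 j * pderiv j (vp * vm + 2 * (sp * sm + tp * tm)) = 0 := by
  rw [sum_univ_ten']
  rw [show so5ContrBk 1 0 = -2 * u3 from rfl,
    show so5ContrBk 1 1 = 0 from rfl,
    show so5ContrBk 1 2 = um from rfl,
    show so5ContrBk 1 3 = 0 from rfl,
    show so5ContrBk 1 4 = 2 * tm from rfl,
    show so5ContrBk 1 5 = 2 * sm from rfl,
    show so5ContrBk 1 6 = -vp from rfl,
    show so5ContrBk 1 7 = 0 from rfl,
    show so5ContrBk 1 8 = -vm from rfl,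
    show so5ContrBk 1 9 = 0 from rfl]
  simp [C₄', up, um, u3, v3, vp, vm, sp, sm, tp, tm, pow_two, pderiv_mul, pderiv_two]
  try ring

lemma inv_c2_2 : ∑ j : Fin 10, so5ContrBk 2 j * pderiv j (vp * vm + 2 * (sp * sm + tp * tm)) = 0 := by
  rw [sum_univ_ten']
  rw [show so5ContrBk 2 0 = up from rfl,
    show so5ContrBk 2 1 = -um from rfl,
    show so5ContrBk 2 2 = 0 from rfl,
    show so5ContrBk 2 3 = 0 from rfl,
    show so5ContrBk 2 4 = 0 from rfl,
    show so5ContrBk 2 5 = 0 from rfl,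
    show so5ContrBk 2 6 = sp from rfl,
    show so5ContrBk 2 7 = -sm from rfl,
    show so5ContrBk 2 8 = tp from rfl,
    show so5ContrBk 2 9 = -tm from rfl]
  simp [C₄', up, um, u3, v3, vp, vm, sp, sm, tp, tm, pow_two, pderiv_mul, pderiv_two]
  try ring

lemma inv_c2_3 : ∑ j : Fin 10, so5ContrBk 3 j * pderiv j (vp * vm + 2 * (sp * sm + tp * tm)) = 0 := by
  rw [sum_univ_ten']
  rw [show so5ContrBk 3 0 = 0 from rfl,
    show so5ContrBk 3 1 = 0 from rfl,
    show so5ContrBk 3 2 = 0 from rfl,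
    show so5ContrBk 3 3 = 0 from rfl,
    show so5ContrBk 3 4 = vp from rfl,
    show so5ContrBk 3 5 = -vm from rfl,
    show so5ContrBk 3 6 = sp from rfl,
    show so5ContrBk 3 7 = -sm from rfl,
    show so5ContrBk 3 8 = -tp from rfl,
    show so5ContrBk 3 9 = tm from rfl]
  simp [C₄', up, um, u3, v3, vp, vm, sp, sm, tp, tm, pow_two, pderiv_mul, pderiv_two]
  try ring

lemma inv_c2_4 : ∑ j : Fin 10, so5ContrBk 4 j * pderiv j (vp * vm + 2 * (sp * sm + tp * tm)) = 0 := by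
  rw [sum_univ_ten']
  rw [show so5ContrBk 4 0 = 2 * sp from rfl,
    show so5ContrBk 4 1 = -2 * tm from rfl,
    show so5ContrBk 4 2 = 0 from rfl,
    show so5ContrBk 4 3 = -vp from rfl,
    show so5ContrBk 4 4 = 0 from rfl,
    show so5ContrBk 4 5 = 0 from rfl,
    show so5ContrBk 4 6 = 0 from rfl,
    show so5ContrBk 4 7 = 0 from rfl,
    show so5ContrBk 4 8 = 0 from rfl,
    show so5ContrBk 4 9 = 0 from rfl]
  simp [C₄', up, um, u3, v3, vp, vm, sp, sm, tp, tm, pow_two, pderiv_mul, pderiv_two]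
  try ring

lemma inv_c2_5 : ∑ j : Fin 10, so5ContrBk 5 j * pderiv j (vp * vm + 2 * (sp * sm + tp * tm)) = 0 := by
  rw [sum_univ_ten']
  rw [show so5ContrBk 5 0 = 2 * tp from rfl,
    show so5ContrBk 5 1 = -2 * sm from rfl,
    show so5ContrBk 5 2 = 0 from rfl,
    show so5ContrBk 5 3 = vm from rfl,
    show so5ContrBk 5 4 = 0 from rfl,
    show so5ContrBk 5 5 = 0 from rfl,
    show so5ContrBk 5 6 = 0 from rfl,
    show so5ContrBk 5 7 = 0 from rfl,
    show so5ContrBk 5 8 = 0 from rfl,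
    show so5ContrBk 5 9 = 0 from rfl]
  simp [C₄', up, um, u3, v3, vp, vm, sp, sm, tp, tm, pow_two, pderiv_mul, pderiv_two]
  try ring

lemma inv_c2_6 : ∑ j : Fin 10, so5ContrBk 6 j * pderiv j (vp * vm + 2 * (sp * sm + tp * tm)) = 0 := by
  rw [sum_univ_ten']
  rw [show so5ContrBk 6 0 = 0 from rfl,
    show so5ContrBk 6 1 = vp from rfl,
    show so5ContrBk 6 2 = -sp from rfl,
    show so5ContrBk 6 3 = -sp from rfl,
    show so5ContrBk 6 4 = 0 from rfl,
    show so5ContrBk 6 5 = 0 from rfl,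
    show so5ContrBk 6 6 = 0 from rfl,
    show so5ContrBk 6 7 = 0 from rfl,
    show so5ContrBk 6 8 = 0 from rfl,
    show so5ContrBk 6 9 = 0 from rfl]
  simp [C₄', up, um, u3, v3, vp, vm, sp, sm, tp, tm, pow_two, pderiv_mul, pderiv_two]
  try ring

lemma inv_c2_7 : ∑ j : Fin 10, so5ContrBk 7 j * pderiv j (vp * vm + 2 * (sp * sm + tp * tm)) = 0 := by
  rw [sum_univ_ten']
  rw [show so5ContrBk 7 0 = -vm from rfl,
    show so5ContrBk 7 1 = 0 from rfl,
    show so5ContrBk 7 2 = sm from rfl,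
    show so5ContrBk 7 3 = sm from rfl,
    show so5ContrBk 7 4 = 0 from rfl,
    show so5ContrBk 7 5 = 0 from rfl,
    show so5ContrBk 7 6 = 0 from rfl,
    show so5ContrBk 7 7 = 0 from rfl,
    show so5ContrBk 7 8 = 0 from rfl,
    show so5ContrBk 7 9 = 0 from rfl]
  simp [C₄', up, um, u3, v3, vp, vm, sp, sm, tp, tm, pow_two, pderiv_mul, pderiv_two]
  try ring

lemma inv_c2_8 : ∑ j : Fin 10, so5ContrBk 8 j * pderiv j (vp * vm + 2 * (sp * sm + tp * tm)) = 0 := by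
  rw [sum_univ_ten']
  rw [show so5ContrBk 8 0 = 0 from rfl,
    show so5ContrBk 8 1 = vm from rfl,
    show so5ContrBk 8 2 = -tp from rfl,
    show so5ContrBk 8 3 = tp from rfl,
    show so5ContrBk 8 4 = 0 from rfl,
    show so5ContrBk 8 5 = 0 from rfl,
    show so5ContrBk 8 6 = 0 from rfl,
    show so5ContrBk 8 7 = 0 from rfl,
    show so5ContrBk 8 8 = 0 from rfl,
    show so5ContrBk 8 9 = 0 from rfl]
  simp [C₄', up, um, u3, v3, vp, vm, sp, sm, tp, tm, pow_two, pderiv_mul, pderiv_two]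
  try ring

lemma inv_c2_9 : ∑ j : Fin 10, so5ContrBk 9 j * pderiv j (vp * vm + 2 * (sp * sm + tp * tm)) = 0 := by
  rw [sum_univ_ten']
  rw [show so5ContrBk 9 0 = -vp from rfl,
    show so5ContrBk 9 1 = 0 from rfl,
    show so5ContrBk 9 2 = tm from rfl,
    show so5ContrBk 9 3 = -tm from rfl,
    show so5ContrBk 9 4 = 0 from rfl,
    show so5ContrBk 9 5 = 0 from rfl,
    show so5ContrBk 9 6 = 0 from rfl,
    show so5ContrBk 9 7 = 0 from rfl,
    show so5ContrBk 9 8 = 0 from rfl,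
    show so5ContrBk 9 9 = 0 from rfl]
  simp [C₄', up, um, u3, v3, vp, vm, sp, sm, tp, tm, pow_two, pderiv_mul, pderiv_two]
  try ring

lemma inv_c4_0 : ∑ j : Fin 10, so5ContrBk 0 j * pderiv j C₄' = 0 := by
  rw [sum_univ_ten']
  rw [show so5ContrBk 0 0 = 0 from rfl,
    show so5ContrBk 0 1 = 2 * u3 from rfl,
    show so5ContrBk 0 2 = -up from rfl,
    show so5ContrBk 0 3 = 0 from rfl,
    show so5ContrBk 0 4 = -2 * sp from rfl,
    show so5ContrBk 0 5 = -2 * tp from rfl,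
    show so5ContrBk 0 6 = 0 from rfl,
    show so5ContrBk 0 7 = vm from rfl,
    show so5ContrBk 0 8 = 0 from rfl,
    show so5ContrBk 0 9 = vp from rfl]
  simp [C₄', up, um, u3, v3, vp, vm, sp, sm, tp, tm, pow_two, pderiv_mul, pderiv_two]
  try ring

lemma inv_c4_1 : ∑ j : Fin 10, so5ContrBk 1 j * pderiv j C₄' = 0 := by
  rw [sum_univ_ten']
  rw [show so5ContrBk 1 0 = -2 * u3 from rfl,
    show so5ContrBk 1 1 = 0 from rfl,
    show so5ContrBk 1 2 = um from rfl,
    show so5ContrBk 1 3 = 0 from rfl,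
    show so5ContrBk 1 4 = 2 * tm from rfl,
    show so5ContrBk 1 5 = 2 * sm from rfl,
    show so5ContrBk 1 6 = -vp from rfl,
    show so5ContrBk 1 7 = 0 from rfl,
    show so5ContrBk 1 8 = -vm from rfl,
    show so5ContrBk 1 9 = 0 from rfl]
  simp [C₄', up, um, u3, v3, vp, vm, sp, sm, tp, tm, pow_two, pderiv_mul, pderiv_two]
  try ring

lemma inv_c4_2 : ∑ j : Fin 10, so5ContrBk 2 j * pderiv j C₄' = 0 := by
  rw [sum_univ_ten']
  rw [show so5ContrBk 2 0 = up from rfl,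
    show so5ContrBk 2 1 = -um from rfl,
    show so5ContrBk 2 2 = 0 from rfl,
    show so5ContrBk 2 3 = 0 from rfl,
    show so5ContrBk 2 4 = 0 from rfl,
    show so5ContrBk 2 5 = 0 from rfl,
    show so5ContrBk 2 6 = sp from rfl,
    show so5ContrBk 2 7 = -sm from rfl,
    show so5ContrBk 2 8 = tp from rfl,
    show so5ContrBk 2 9 = -tm from rfl]
  simp [C₄', up, um, u3, v3, vp, vm, sp, sm, tp, tm, pow_two, pderiv_mul, pderiv_two]
  try ring

lemma inv_c4_3 : ∑ j : Fin 10, so5ContrBk 3 j * pderiv j C₄' = 0 := by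
  rw [sum_univ_ten']
  rw [show so5ContrBk 3 0 = 0 from rfl,
    show so5ContrBk 3 1 = 0 from rfl,
    show so5ContrBk 3 2 = 0 from rfl,
    show so5ContrBk 3 3 = 0 from rfl,
    show so5ContrBk 3 4 = vp from rfl,
    show so5ContrBk 3 5 = -vm from rfl,
    show so5ContrBk 3 6 = sp from rfl,
    show so5ContrBk 3 7 = -sm from rfl,
    show so5ContrBk 3 8 = -tp from rfl,
    show so5ContrBk 3 9 = tm from rfl]
  simp [C₄', up, um, u3, v3, vp, vm, sp, sm, tp, tm, pow_two, pderiv_mul, pderiv_two]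
  try ring

lemma inv_c4_4 : ∑ j : Fin 10, so5ContrBk 4 j * pderiv j C₄' = 0 := by
  rw [sum_univ_ten']
  rw [show so5ContrBk 4 0 = 2 * sp from rfl,
    show so5ContrBk 4 1 = -2 * tm from rfl,
    show so5ContrBk 4 2 = 0 from rfl,
    show so5ContrBk 4 3 = -vp from rfl,
    show so5ContrBk 4 4 = 0 from rfl,
    show so5ContrBk 4 5 = 0 from rfl,
    show so5ContrBk 4 6 = 0 from rfl,
    show so5ContrBk 4 7 = 0 from rfl,
    show so5ContrBk 4 8 = 0 from rfl,
    show so5ContrBk 4 9 = 0 from rfl]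
  simp [C₄', up, um, u3, v3, vp, vm, sp, sm, tp, tm, pow_two, pderiv_mul, pderiv_two]
  try ring

lemma inv_c4_5 : ∑ j : Fin 10, so5ContrBk 5 j * pderiv j C₄' = 0 := by
  rw [sum_univ_ten']
  rw [show so5ContrBk 5 0 = 2 * tp from rfl,
    show so5ContrBk 5 1 = -2 * sm from rfl,
    show so5ContrBk 5 2 = 0 from rfl,
    show so5ContrBk 5 3 = vm from rfl,
    show so5ContrBk 5 4 = 0 from rfl,
    show so5ContrBk 5 5 = 0 from rfl,
    show so5ContrBk 5 6 = 0 from rfl,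
    show so5ContrBk 5 7 = 0 from rfl,
    show so5ContrBk 5 8 = 0 from rfl,
    show so5ContrBk 5 9 = 0 from rfl]
  simp [C₄', up, um, u3, v3, vp, vm, sp, sm, tp, tm, pow_two, pderiv_mul, pderiv_two]
  try ring

lemma inv_c4_6 : ∑ j : Fin 10, so5ContrBk 6 j * pderiv j C₄' = 0 := by
  rw [sum_univ_ten']
  rw [show so5ContrBk 6 0 = 0 from rfl,
    show so5ContrBk 6 1 = vp from rfl,
    show so5ContrBk 6 2 = -sp from rfl,
    show so5ContrBk 6 3 = -sp from rfl,
    show so5ContrBk 6 4 = 0 from rfl,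
    show so5ContrBk 6 5 = 0 from rfl,
    show so5ContrBk 6 6 = 0 from rfl,
    show so5ContrBk 6 7 = 0 from rfl,
    show so5ContrBk 6 8 = 0 from rfl,
    show so5ContrBk 6 9 = 0 from rfl]
  simp [C₄', up, um, u3, v3, vp, vm, sp, sm, tp, tm, pow_two, pderiv_mul, pderiv_two]
  try ring

lemma inv_c4_7 : ∑ j : Fin 10, so5ContrBk 7 j * pderiv j C₄' = 0 := by
  rw [sum_univ_ten']
  rw [show so5ContrBk 7 0 = -vm from rfl,
    show so5ContrBk 7 1 = 0 from rfl,
    show so5ContrBk 7 2 = sm from rfl,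
    show so5ContrBk 7 3 = sm from rfl,
    show so5ContrBk 7 4 = 0 from rfl,
    show so5ContrBk 7 5 = 0 from rfl,
    show so5ContrBk 7 6 = 0 from rfl,
    show so5ContrBk 7 7 = 0 from rfl,
    show so5ContrBk 7 8 = 0 from rfl,
    show so5ContrBk 7 9 = 0 from rfl]
  simp [C₄', up, um, u3, v3, vp, vm, sp, sm, tp, tm, pow_two, pderiv_mul, pderiv_two]
  try ring

lemma inv_c4_8 : ∑ j : Fin 10, so5ContrBk 8 j * pderiv j C₄' = 0 := by
  rw [sum_univ_ten']
  rw [show so5ContrBk 8 0 = 0 from rfl,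
    show so5ContrBk 8 1 = vm from rfl,
    show so5ContrBk 8 2 = -tp from rfl,
    show so5ContrBk 8 3 = tp from rfl,
    show so5ContrBk 8 4 = 0 from rfl,
    show so5ContrBk 8 5 = 0 from rfl,
    show so5ContrBk 8 6 = 0 from rfl,
    show so5ContrBk 8 7 = 0 from rfl,
    show so5ContrBk 8 8 = 0 from rfl,
    show so5ContrBk 8 9 = 0 from rfl]
  simp [C₄', up, um, u3, v3, vp, vm, sp, sm, tp, tm, pow_two, pderiv_mul, pderiv_two]
  try ring

lemma inv_c4_9 : ∑ j : Fin 10, so5ContrBk 9 j * pderiv j C₄' = 0 := by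
  rw [sum_univ_ten']
  rw [show so5ContrBk 9 0 = -vp from rfl,
    show so5ContrBk 9 1 = 0 from rfl,
    show so5ContrBk 9 2 = tm from rfl,
    show so5ContrBk 9 3 = -tm from rfl,
    show so5ContrBk 9 4 = 0 from rfl,
    show so5ContrBk 9 5 = 0 from rfl,
    show so5ContrBk 9 6 = 0 from rfl,
    show so5ContrBk 9 7 = 0 from rfl,
    show so5ContrBk 9 8 = 0 from rfl,
    show so5ContrBk 9 9 = 0 from rfl]
  simp [C₄', up, um, u3, v3, vp, vm, sp, sm, tp, tm, pow_two, pderiv_mul, pderiv_two]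
  try ring

theorem seniority_contraction_invariants :
    IsLieInvariant so5ContrBk (vp * vm + 2 * (sp * sm + tp * tm)) ∧
    IsLieInvariant so5ContrBk C₄' := by
  constructor <;> intro i <;> fin_cases i
  · exact inv_c2_0
  · exact inv_c2_1
  · exact inv_c2_2
  · exact inv_c2_3
  · exact inv_c2_4
  · exact inv_c2_5
  · exact inv_c2_6
  · exact inv_c2_7
  · exact inv_c2_8
  · exact inv_c2_9
  · exact inv_c4_0
  · exact inv_c4_1
  · exact inv_c4_2
  · exact inv_c4_3
  · exact inv_c4_4
  · exact inv_c4_5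
  · exact inv_c4_6
  · exact inv_c4_7
  · exact inv_c4_8
  · exact inv_c4_9
end

section
/- Let Ω₄ be the polynomial Ω₄ = u₊u₋(s₊s₋+t₊t₋) + u₃²v₊v₋ + u₊²s₋t₋ + u₋²s₊t₊ + 2u₃v₃(s₊s₋−t₊t₋) + ((t₋v₋−s₋v₊)u₊ + (t₊v₊−s₊v₋)u₋)v₃ + ((t₊v₊+s₊v₋)u₋ + (s₋v₊+t₋v₋)u₊)u₃ in the dual coordinates of so(5). Then Ω₄ is a subgroup scalar for the chain so(5) ⊃ su(2) × u(1): for each generator X ∈ {U₊, U₋, U₃, V₃} of the subalgebra, with the structure constants C_{ij}^k of so(5), one has Σ_{j,k} C_{Xj}^k x_k ∂Ω₄/∂x_j = 0. -/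
open MvPolynomial

/-- The missing label operator `Ω₄` for the seniority reduction `so(5) ⊃ su(2) × u(1)`. -/
noncomputable def Ω₄ : MvPolynomial (Fin 10) ℝ :=
  up * um * (sp * sm + tp * tm) + u3 ^ 2 * vp * vm
    + up ^ 2 * sm * tm + um ^ 2 * sp * tp + 2 * u3 * v3 * (sp * sm - tp * tm)
    + ((tm * vm - sm * vp) * up + (tp * vp - sp * vm) * um) * v3
    + ((tp * vp + sp * vm) * um + (sm * vp + tm * vm) * up) * u3

/- STATEMENT 14: `Ω₄` is a subgroup scalar for the chain `so(5) ⊃ su(2) × u(1)`: for each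
generator `X ∈ {U₊, U₋, U₃, V₃}` of the subalgebra (indices `0,…,3`), with the structure
constants `C_{ij}^k` of `so(5)` (encoded through `so5Bk i j = Σ_k C_{ij}^k x_k`), one has
`Σ_{j,k} C_{Xj}^k x_k ∂Ω₄/∂x_j = 0`. -/
lemma vec10_0 {α : Type*} (a0 a1 a2 a3 a4 a5 a6 a7 a8 a9 : α) :
    ![a0, a1, a2, a3, a4, a5, a6, a7, a8, a9] (0 : Fin 10) = a0 := rfl
lemma vec10_1 {α : Type*} (a0 a1 a2 a3 a4 a5 a6 a7 a8 a9 : α) :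
    ![a0, a1, a2, a3, a4, a5, a6, a7, a8, a9] (1 : Fin 10) = a1 := rfl
lemma vec10_2 {α : Type*} (a0 a1 a2 a3 a4 a5 a6 a7 a8 a9 : α) :
    ![a0, a1, a2, a3, a4, a5, a6, a7, a8, a9] (2 : Fin 10) = a2 := rfl
lemma vec10_3 {α : Type*} (a0 a1 a2 a3 a4 a5 a6 a7 a8 a9 : α) :
    ![a0, a1, a2, a3, a4, a5, a6, a7, a8, a9] (3 : Fin 10) = a3 := rfl
lemma vec10_4 {α : Type*} (a0 a1 a2 a3 a4 a5 a6 a7 a8 a9 : α) :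
    ![a0, a1, a2, a3, a4, a5, a6, a7, a8, a9] (4 : Fin 10) = a4 := rfl
lemma vec10_5 {α : Type*} (a0 a1 a2 a3 a4 a5 a6 a7 a8 a9 : α) :
    ![a0, a1, a2, a3, a4, a5, a6, a7, a8, a9] (5 : Fin 10) = a5 := rfl
lemma vec10_6 {α : Type*} (a0 a1 a2 a3 a4 a5 a6 a7 a8 a9 : α) :
    ![a0, a1, a2, a3, a4, a5, a6, a7, a8, a9] (6 : Fin 10) = a6 := rfl
lemma vec10_7 {α : Type*} (a0 a1 a2 a3 a4 a5 a6 a7 a8 a9 : α) :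
    ![a0, a1, a2, a3, a4, a5, a6, a7, a8, a9] (7 : Fin 10) = a7 := rfl
lemma vec10_8 {α : Type*} (a0 a1 a2 a3 a4 a5 a6 a7 a8 a9 : α) :
    ![a0, a1, a2, a3, a4, a5, a6, a7, a8, a9] (8 : Fin 10) = a8 := rfl
lemma vec10_9 {α : Type*} (a0 a1 a2 a3 a4 a5 a6 a7 a8 a9 : α) :
    ![a0, a1, a2, a3, a4, a5, a6, a7, a8, a9] (9 : Fin 10) = a9 := rfl

lemma pd2 (j : Fin 10) : pderiv j (2 : MvPolynomial (Fin 10) ℝ) = 0 := by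
  rw [← map_ofNat (C : ℝ →+* MvPolynomial (Fin 10) ℝ) 2, pderiv_C]

lemma sum10 (f : Fin 10 → MvPolynomial (Fin 10) ℝ) :
    ∑ j : Fin 10, f j = f 0 + f 1 + f 2 + f 3 + f 4 + f 5 + f 6 + f 7 + f 8 + f 9 := by
  rw [Fin.sum_univ_castSucc, Fin.sum_univ_castSucc, Fin.sum_univ_eight]
  rfl

lemma dΩ0 : pderiv (0 : Fin 10) Ω₄ = v3 * vm * tm - v3 * vp * sm + u3 * vm * tm + u3 * vp * sm + um * tp * tm + um * sp * sm + 2 * up * sm * tm := by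
  simp only [Ω₄, up, um, u3, v3, vp, vm, sp, sm, tp, tm, map_add, pderiv_mul, pderiv_pow,
    pderiv_X, pd2, Pi.single_apply]
  simp [up, um, u3, v3, vp, vm, sp, sm, tp, tm, Pi.single_apply]
  ring

lemma dΩ1 : pderiv (1 : Fin 10) Ω₄ = -(v3 * vm * sp) + v3 * vp * tp + u3 * vm * sp + u3 * vp * tp + 2 * um * sp * tp + up * tp * tm + up * sp * sm := by
  simp only [Ω₄, up, um, u3, v3, vp, vm, sp, sm, tp, tm, map_add, pderiv_mul, pderiv_pow,
    pderiv_X, pd2, Pi.single_apply]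
  simp [up, um, u3, v3, vp, vm, sp, sm, tp, tm, Pi.single_apply]
  ring

lemma dΩ2 : pderiv (2 : Fin 10) Ω₄ = -(2 * v3 * tp * tm) + 2 * v3 * sp * sm + 2 * u3 * vp * vm + um * vm * sp + um * vp * tp + up * vm * tm + up * vp * sm := by
  simp only [Ω₄, up, um, u3, v3, vp, vm, sp, sm, tp, tm, map_add, pderiv_mul, pderiv_pow,
    pderiv_X, pd2, Pi.single_apply]
  simp [up, um, u3, v3, vp, vm, sp, sm, tp, tm, Pi.single_apply]
  ring

lemma dΩ3 : pderiv (3 : Fin 10) Ω₄ = -(2 * u3 * tp * tm) + 2 * u3 * sp * sm - um * vm * sp + um * vp * tp + up * vm * tm - up * vp * sm := by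
  simp only [Ω₄, up, um, u3, v3, vp, vm, sp, sm, tp, tm, map_add, pderiv_mul, pderiv_pow,
    pderiv_X, pd2, Pi.single_apply]
  simp [up, um, u3, v3, vp, vm, sp, sm, tp, tm, Pi.single_apply]
  ring

lemma dΩ4 : pderiv (4 : Fin 10) Ω₄ = u3 ^ 2 * vm + um * v3 * tp + um * u3 * tp - up * v3 * sm + up * u3 * sm := by
  simp only [Ω₄, up, um, u3, v3, vp, vm, sp, sm, tp, tm, map_add, pderiv_mul, pderiv_pow,
    pderiv_X, pd2, Pi.single_apply]
  simp [up, um, u3, v3, vp, vm, sp, sm, tp, tm, Pi.single_apply]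
  ring

lemma dΩ5 : pderiv (5 : Fin 10) Ω₄ = u3 ^ 2 * vp - um * v3 * sp + um * u3 * sp + up * v3 * tm + up * u3 * tm := by
  simp only [Ω₄, up, um, u3, v3, vp, vm, sp, sm, tp, tm, map_add, pderiv_mul, pderiv_pow,
    pderiv_X, pd2, Pi.single_apply]
  simp [up, um, u3, v3, vp, vm, sp, sm, tp, tm, Pi.single_apply]
  ring

lemma dΩ6 : pderiv (6 : Fin 10) Ω₄ = 2 * u3 * v3 * sm - um * v3 * vm + um * u3 * vm + um ^ 2 * tp + up * um * sm := by
  simp only [Ω₄, up, um, u3, v3, vp, vm, sp, sm, tp, tm, map_add, pderiv_mul, pderiv_pow,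
    pderiv_X, pd2, Pi.single_apply]
  simp [up, um, u3, v3, vp, vm, sp, sm, tp, tm, Pi.single_apply]
  ring

lemma dΩ7 : pderiv (7 : Fin 10) Ω₄ = 2 * u3 * v3 * sp - up * v3 * vp + up * u3 * vp + up * um * sp + up ^ 2 * tm := by
  simp only [Ω₄, up, um, u3, v3, vp, vm, sp, sm, tp, tm, map_add, pderiv_mul, pderiv_pow,
    pderiv_X, pd2, Pi.single_apply]
  simp [up, um, u3, v3, vp, vm, sp, sm, tp, tm, Pi.single_apply]
  ring

lemma dΩ8 : pderiv (8 : Fin 10) Ω₄ = -(2 * u3 * v3 * tm) + um * v3 * vp + um * u3 * vp + um ^ 2 * sp + up * um * tm := by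
  simp only [Ω₄, up, um, u3, v3, vp, vm, sp, sm, tp, tm, map_add, pderiv_mul, pderiv_pow,
    pderiv_X, pd2, Pi.single_apply]
  simp [up, um, u3, v3, vp, vm, sp, sm, tp, tm, Pi.single_apply]
  ring

lemma dΩ9 : pderiv (9 : Fin 10) Ω₄ = -(2 * u3 * v3 * tp) + up * v3 * vm + up * u3 * vm + up * um * tp + up ^ 2 * sm := by
  simp only [Ω₄, up, um, u3, v3, vp, vm, sp, sm, tp, tm, map_add, pderiv_mul, pderiv_pow,
    pderiv_X, pd2, Pi.single_apply]
  simp [up, um, u3, v3, vp, vm, sp, sm, tp, tm, Pi.single_apply]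
  ring

set_option maxHeartbeats 1000000 in
lemma omega4_case0 : ∑ j : Fin 10, so5Bk 0 j * pderiv j Ω₄ = 0 := by
  rw [sum10 fun j => so5Bk 0 j * pderiv j Ω₄]
  simp only [so5Bk, vec10_0, vec10_1, vec10_2, vec10_3, vec10_4, vec10_5, vec10_6,
    vec10_7, vec10_8, vec10_9, dΩ0, dΩ1, dΩ2, dΩ3, dΩ4, dΩ5, dΩ6, dΩ7, dΩ8, dΩ9]
  ring

set_option maxHeartbeats 1000000 in
lemma omega4_case1 : ∑ j : Fin 10, so5Bk 1 j * pderiv j Ω₄ = 0 := by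
  rw [sum10 fun j => so5Bk 1 j * pderiv j Ω₄]
  simp only [so5Bk, vec10_0, vec10_1, vec10_2, vec10_3, vec10_4, vec10_5, vec10_6,
    vec10_7, vec10_8, vec10_9, dΩ0, dΩ1, dΩ2, dΩ3, dΩ4, dΩ5, dΩ6, dΩ7, dΩ8, dΩ9]
  ring

set_option maxHeartbeats 1000000 in
lemma omega4_case2 : ∑ j : Fin 10, so5Bk 2 j * pderiv j Ω₄ = 0 := by
  rw [sum10 fun j => so5Bk 2 j * pderiv j Ω₄]
  simp only [so5Bk, vec10_0, vec10_1, vec10_2, vec10_3, vec10_4, vec10_5, vec10_6,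
    vec10_7, vec10_8, vec10_9, dΩ0, dΩ1, dΩ2, dΩ3, dΩ4, dΩ5, dΩ6, dΩ7, dΩ8, dΩ9]
  ring

set_option maxHeartbeats 1000000 in
lemma omega4_case3 : ∑ j : Fin 10, so5Bk 3 j * pderiv j Ω₄ = 0 := by
  rw [sum10 fun j => so5Bk 3 j * pderiv j Ω₄]
  simp only [so5Bk, vec10_0, vec10_1, vec10_2, vec10_3, vec10_4, vec10_5, vec10_6,
    vec10_7, vec10_8, vec10_9, dΩ0, dΩ1, dΩ2, dΩ3, dΩ4, dΩ5, dΩ6, dΩ7, dΩ8, dΩ9]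
  ring

theorem omega4_subgroup_scalar :
    ∀ i : Fin 10, i.1 < 4 → ∑ j : Fin 10, so5Bk i j * pderiv j Ω₄ = 0 := by
  intro i hi
  obtain ⟨n, hn⟩ := i
  have h4 : n < 4 := hi
  interval_cases n
  · exact omega4_case0
  · exact omega4_case1
  · exact omega4_case2
  · exact omega4_case3
end
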